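/- Let η be a probability measure on [0,1), and for n, m ∈ ℕ let P_n^η be the distribution of a random component η_{x,i} (i uniform in {0,…,n}, x ∼ η), and Q_{n,m}^η the distribution obtained by first choosing η_{x,i} as above and then choosing a component of it at a level j uniform in {i,…,i+m}. Then the total variation distance satisfies ‖P_n^η − Q_{n,m}^η‖ = O(m/n). -/

import Mathlib

/-!
Both `P_n^η` and `Q_{n,m}^η` give the cell `(i, k)` a weight proportional to its mass
`η(D_i k)`, with a factor depending only on the level `i`: `1/(n+1)` for `i ≤ n` in `P`, and
`#{i' ∈ [i-m, i] ∩ [0, n]}/((n+1)(m+1))` in `Q`. These factors agree except on the `2m` levels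
`i < m` and `n < i ≤ n + m`, where they differ by at most `1/(n+1)`. Since the cells of one level
are disjoint, each level carries mass at most one, so the total variation is at most `2m/(n+1)`.
-/

open MeasureTheory

/-- The level-`i` dyadic cell `[k/2^i, (k+1)/2^i)`. -/
noncomputable def dcell (i k : ℕ) : Set ℝ :=
  Set.Ico ((k : ℝ) / 2 ^ i) (((k : ℝ) + 1) / 2 ^ i)

/-- `P_n^η`: the distribution of the random component `η_{x,i}` (identified with the
pair (level `i`, dyadic cell index)), where `i` is uniform in `{0,…,n}` and `x ∼ η`. -/
noncomputable def compDist (η : Measure ℝ) (n : ℕ) : ℕ × ℕ → ℝ :=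
  fun p => if p.1 ≤ n then ((n : ℝ) + 1)⁻¹ * (η (dcell p.1 p.2)).toReal else 0

/-- `Q_{n,m}^η`: the distribution of a component of a random component: first `i` uniform
in `{0,…,n}` and `x ∼ η`, then a component of `η_{x,i}` at level `j` uniform in
`{i,…,i+m}`; the result is the component of `η` at level `j` containing `x`. -/
noncomputable def compCompDist (η : Measure ℝ) (n m : ℕ) : ℕ × ℕ → ℝ :=
  fun p => (((Finset.Icc (p.1 - m) (min p.1 n)).card : ℝ) / (((n : ℝ) + 1) * ((m : ℝ) + 1)))
    * (η (dcell p.1 p.2)).toReal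

lemma tsum_prod_mul_le_card_mul {w : ℕ → ℝ} {a : ℕ → ℕ → ℝ} {c : ℝ} (S : Finset ℕ)
    (hw₀ : ∀ i, 0 ≤ w i) (hwc : ∀ i, w i ≤ c) (hwS : ∀ i ∉ S, w i = 0)
    (ha₀ : ∀ i k, 0 ≤ a i k) (ha₁ : ∀ i (K : Finset ℕ), ∑ k ∈ K, a i k ≤ 1) :
    ∑' p : ℕ × ℕ, w p.1 * a p.1 p.2 ≤ S.card * c := by
  have hc : 0 ≤ c := (hw₀ 0).trans (hwc 0)
  refine tsum_le_of_sum_le' (by positivity) fun s => ?_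
  calc ∑ p ∈ s, w p.1 * a p.1 p.2
      = ∑ p ∈ s with p.1 ∈ S, w p.1 * a p.1 p.2 := by
        refine (Finset.sum_filter_of_ne fun p _ hp => ?_).symm
        by_contra hpS
        exact hp (by rw [hwS p.1 hpS, zero_mul])
    _ ≤ ∑ p ∈ S ×ˢ s.image Prod.snd, w p.1 * a p.1 p.2 := by
        refine Finset.sum_le_sum_of_subset_of_nonneg (fun p hp => ?_)
          fun p _ _ => mul_nonneg (hw₀ _) (ha₀ _ _)
        rw [Finset.mem_filter] at hp
        exact Finset.mem_product.mpr ⟨hp.2, Finset.mem_image_of_mem _ hp.1⟩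
    _ = ∑ i ∈ S, w i * ∑ k ∈ s.image Prod.snd, a i k := by
        simp only [Finset.sum_product, Finset.mul_sum]
    _ ≤ ∑ _i ∈ S, c := Finset.sum_le_sum fun i _ =>
        (mul_le_of_le_one_right (hw₀ i) (ha₁ i _)).trans (hwc i)
    _ = S.card * c := by rw [Finset.sum_const, nsmul_eq_mul]

open Function in
lemma pairwise_disjoint_dcell (i : ℕ) : Pairwise (Disjoint on dcell i) := by
  have hmono : Monotone fun k : ℕ => (k : ℝ) / 2 ^ i := fun k l hkl =>
    div_le_div_of_nonneg_right (by exact_mod_cast hkl) (by positivity)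
  have h := hmono.pairwise_disjoint_on_Ico_succ
  simp only [Order.succ_eq_add_one, Nat.cast_add_one] at h
  exact h

lemma sum_measureReal_dcell_le (μ : Measure ℝ) [IsFiniteMeasure μ] (i : ℕ) (K : Finset ℕ) :
    ∑ k ∈ K, μ.real (dcell i k) ≤ μ.real Set.univ := by
  rw [← measureReal_biUnion_finset ((pairwise_disjoint_dcell i).set_pairwise _)
    fun k _ => (measurableSet_Ico : MeasurableSet (dcell i k))]
  exact measureReal_mono (Set.subset_univ _)

noncomputable def levelWeightGap (n m i : ℕ) : ℝ :=
  |(if i ≤ n then ((n : ℝ) + 1)⁻¹ else 0) -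
    ((Finset.Icc (i - m) (min i n)).card : ℝ) / (((n : ℝ) + 1) * ((m : ℝ) + 1))|

lemma abs_compDist_sub_compCompDist (η : Measure ℝ) (n m : ℕ) (p : ℕ × ℕ) :
    |compDist η n p - compCompDist η n m p| = levelWeightGap n m p.1 * η.real (dcell p.1 p.2) := by
  rw [levelWeightGap, ← abs_of_nonneg (measureReal_nonneg (μ := η)), ← abs_mul]
  simp only [compDist, compCompDist, measureReal_def]
  congr 1
  split_ifs <;> ring

lemma levelWeightGap_le (n m i : ℕ) : levelWeightGap n m i ≤ ((n : ℝ) + 1)⁻¹ := by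
  have hcard : ((Finset.Icc (i - m) (min i n)).card : ℝ) ≤ (m : ℝ) + 1 := by
    rw [Nat.card_Icc]; norm_cast; omega
  have hQ : ((Finset.Icc (i - m) (min i n)).card : ℝ) / (((n : ℝ) + 1) * ((m : ℝ) + 1))
      ≤ ((n : ℝ) + 1)⁻¹ :=
    calc _ ≤ ((m : ℝ) + 1) / (((n : ℝ) + 1) * ((m : ℝ) + 1)) := by gcongr
      _ = ((n : ℝ) + 1)⁻¹ := by field_simp
  refine abs_sub_le_of_nonneg_of_le (by split_ifs <;> positivity) ?_ (by positivity) hQ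
  split_ifs
  exacts [le_rfl, by positivity]

lemma levelWeightGap_eq_zero {n m i : ℕ} (hmi : m ≤ i) (hi : i ≤ n ∨ n + m < i) :
    levelWeightGap n m i = 0 := by
  rw [levelWeightGap, abs_eq_zero, sub_eq_zero]
  rcases hi with hin | hin
  · rw [if_pos hin, min_eq_left hin, Nat.card_Icc, show i + 1 - (i - m) = m + 1 by omega]
    push_cast
    field_simp
  · rw [if_neg (by omega), min_eq_right (by omega), Nat.card_Icc, Nat.sub_eq_zero_of_le (by omega)]
    simp

/-- The total variation distance between the distribution of components
`P_n^η` and the distribution of components-of-components `Q_{n,m}^η` is `O(m/n)`. -/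
theorem components_of_components_tv_bound :
    ∃ C > (0 : ℝ), ∀ (η : Measure ℝ), IsProbabilityMeasure η → η (Set.Ico 0 1) = 1 →
      ∀ n m : ℕ, 1 ≤ n →
      ∑' p : ℕ × ℕ, |compDist η n p - compCompDist η n m p| ≤ C * m / n := by
  refine ⟨2, two_pos, fun η _ _ n m hn => ?_⟩
  set S := Finset.range m ∪ Finset.Ioc n (n + m)
  have hS : (S.card : ℝ) ≤ 2 * m := by
    have : S.card ≤ 2 * m :=
      (Finset.card_union_le _ _).trans (by rw [Finset.card_range, Nat.card_Ioc]; omega)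
    exact_mod_cast this
  have hgap : ∀ i ∉ S, levelWeightGap n m i = 0 := fun i hi => by
    simp only [S, Finset.mem_union, Finset.mem_range, Finset.mem_Ioc, not_or] at hi
    exact levelWeightGap_eq_zero (by omega) (by omega)
  have hn' : (0 : ℝ) < n := by exact_mod_cast hn
  calc ∑' p : ℕ × ℕ, |compDist η n p - compCompDist η n m p|
      = ∑' p : ℕ × ℕ, levelWeightGap n m p.1 * η.real (dcell p.1 p.2) := by
        simp only [abs_compDist_sub_compCompDist]
    _ ≤ S.card * ((n : ℝ) + 1)⁻¹ :=
        tsum_prod_mul_le_card_mul S (fun _ => abs_nonneg _) (levelWeightGap_le n m) hgap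
          (fun _ _ => measureReal_nonneg)
          fun i K => (sum_measureReal_dcell_le η i K).trans_eq probReal_univ
    _ ≤ 2 * m * (n : ℝ)⁻¹ := by gcongr; linarith
    _ = 2 * m / n := by ring
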